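/- Let T be a Turing machine such that for every N ∈ ℕ the machine can make a right-cycle of width greater than N at cell 0 (i.e., for each j there is a configuration on which the head starts at 0, reaches cell n_j > j, and returns to 0). Then T_H has a configuration containing the head which is not an equicontinuity point. -/

import Mathlib

/-- A Turing machine with tape alphabet `A`, state set `Q`, and rule
`δ : A × Q → A × Q × {-1,1}` (the direction is encoded by a `Bool`). -/
structure TuringMachine (A Q : Type*) where
  δ : A → Q → A × Q × Bool

namespace TuringMachine

variable {A Q : Type*}

/-- Direction of a move: `true ↦ +1`, `false ↦ -1`. -/
def dir (b : Bool) : ℤ := if b then 1 else -1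

/-- A configuration: tape contents, head state, head position. -/
abbrev Config (A Q : Type*) := (ℤ → A) × Q × ℤ

/-- One step of the machine on `X = A^ℤ × Q × ℤ`. -/
def step (M : TuringMachine A Q) (c : Config A Q) : Config A Q :=
  let r := M.δ (c.1 c.2.2) c.2.1
  (Function.update c.1 c.2.2 r.1, r.2.1, c.2.2 + dir r.2.2)

/-- Head position after `t` steps. -/
def pos (M : TuringMachine A Q) (t : ℕ) (c : Config A Q) : ℤ :=
  ((M.step)^[t] c).2.2

/-- `c` is preperiodic for the machine. -/
def Preperiodic (M : TuringMachine A Q) (c : Config A Q) : Prop :=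
  ∃ m p : ℕ, 0 < p ∧ (M.step)^[m + p] c = (M.step)^[m] c

end TuringMachine

namespace TuringMachine

variable {A Q : Type*}

/-- Alphabet of the moving-head system: a tape letter, or a tape letter marked
with the head together with its state. -/
abbrev Cell (A Q : Type*) := A ⊕ (A × Q)

/-- A cell carries the head. -/
def isHead {A Q : Type*} (b : Cell A Q) : Prop := ∃ p : A × Q, b = Sum.inr p

/-- Membership in the moving-head phase space X_H: at most one marked cell. -/
def XHmem (x : ℤ → Cell A Q) : Prop :=
  Set.Subsingleton {i : ℤ | isHead (x i)}

/-- One step of the moving-head system T_H on (A ⊔ (A × Q))^ℤ: if there is a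
head, apply the rule of the machine at the marked cell (write, change state, and
move the mark by ±1); otherwise do nothing. -/
noncomputable def hstep (M : TuringMachine A Q) (x : ℤ → Cell A Q) :
    ℤ → Cell A Q := by
  classical
  exact if h : ∃ i : ℤ, ∃ b : A, ∃ q : Q, x i = Sum.inr (b, q) then
    let i := h.choose
    let b := h.choose_spec.choose
    let q := h.choose_spec.choose_spec.choose
    let r := M.δ b q
    let y := Function.update x i (Sum.inl r.1)
    let j := i + dir r.2.2
    Function.update y j
      (match y j with
        | Sum.inl c => Sum.inr (c, r.2.1)
        | Sum.inr (c, _) => Sum.inr (c, r.2.1))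
  else x

/-- The column observed at cell 0, defining the subshift S_H. -/
noncomputable def tauH (M : TuringMachine A Q) (x : ℤ → Cell A Q) (t : ℕ) :
    Cell A Q :=
  ((M.hstep)^[t] x) 0

/-- The language of finite factors of the column subshift S_H. -/
noncomputable def langSH (M : TuringMachine A Q) : Language (Cell A Q) :=
  {w : List (Cell A Q) | ∃ x : ℤ → Cell A Q, XHmem x ∧ ∃ m : ℕ,
    ∀ j : ℕ, ∀ hj : j < w.length, w.get ⟨j, hj⟩ = M.tauH x (m + j)}

end TuringMachine

/-!
Cutting a wide right-cycle at its last visit to cell 0 before the far cell `n` gives a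
configuration whose head leaves 0, stays away from 0 for at least `n` steps, and later comes back.
By compactness of `X_H`, the moving-head pictures of these configurations have a cluster point `x`,
with its head at 0. Since `T_H` acts on `X_H` as a cellular automaton of radius 1, the head of `x`
never comes back to 0, while `x` is approximated arbitrarily well by configurations whose head
does: cell 0 separates the orbits, so `x` is not an equicontinuity point.
-/

theorem exists_frequently_forall_finset_eq {ι α : Type*} [Finite α] (f : ℕ → ι → α) :
    ∃ x : ι → α, ∀ W : Finset ι, ∃ᶠ j in Filter.atTop, ∀ i ∈ W, f j i = x i := by
  let U : Ultrafilter ℕ := Filter.hyperfilter ℕ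
  choose x hx using fun i => (U.map (f · i)).eq_pure_of_finite
  refine ⟨x, fun W => ?_⟩
  have hW : ∀ᶠ j in (U : Filter ℕ), ∀ i ∈ W, f j i = x i := by
    refine (Filter.eventually_all_finset W).2 fun i _ => ?_
    have hi : {x i} ∈ U.map (f · i) := by
      rw [hx i]
      exact Set.mem_singleton _
    exact Ultrafilter.mem_map.1 hi
  exact hW.frequently.filter_mono Nat.hyperfilter_le_atTop

namespace TuringMachine

variable {A Q : Type*}

lemma dir_eq_one_or_neg_one (b : Bool) : dir b = 1 ∨ dir b = -1 := by
  cases b <;> simp [dir]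

lemma add_dir_ne_self (p : ℤ) (b : Bool) : p + dir b ≠ p := by
  rcases dir_eq_one_or_neg_one b with h | h <;> omega

lemma not_isHead_inl (a : A) : ¬ isHead (Sum.inl a : Cell A Q) := by
  rintro ⟨_, ⟨⟩⟩

variable (M : TuringMachine A Q)

lemma exists_pos_succ_eq_add_dir (c : Config A Q) (t : ℕ) :
    ∃ b, M.pos (t + 1) c = M.pos t c + dir b :=
  ⟨_, by rw [pos, Function.iterate_succ_apply']; rfl⟩

lemma pos_iterate (c : Config A Q) (s t : ℕ) : M.pos t ((M.step)^[s] c) = M.pos (t + s) c := by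
  rw [pos, pos, Function.iterate_add_apply]

lemma abs_pos_add_sub_pos_le (c : Config A Q) (s t : ℕ) :
    |M.pos (s + t) c - M.pos s c| ≤ t := by
  induction t with
  | zero => simp
  | succ t ih =>
    obtain ⟨b, hb⟩ := M.exists_pos_succ_eq_add_dir c (s + t)
    rw [← add_assoc, hb, abs_le]
    rw [abs_le] at ih
    rcases dir_eq_one_or_neg_one b with h | h <;> rw [h] <;> push_cast <;> constructor <;> linarith

/-- Restart at the last visit to cell 0 before time `t₁`: the head then needs at least `n` steps
to reach cell `n`, and does not meet cell 0 on the way. -/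
lemma exists_excursion {c : Config A Q} {n t₁ t₂ : ℕ} (hc : c.2.2 = 0)
    (h₁ : M.pos t₁ c = n) (h₁₂ : t₁ < t₂) (h₂ : M.pos t₂ c = 0) :
    ∃ (d : Config A Q) (v : ℕ), d.2.2 = 0 ∧ 0 < v ∧ M.pos v d = 0 ∧
      ∀ t, 0 < t → t ≤ n → M.pos t d ≠ 0 := by
  classical
  set s := Nat.findGreatest (fun s => M.pos s c = 0) t₁
  have hs : M.pos s c = 0 := Nat.findGreatest_spec (P := fun s => M.pos s c = 0) (Nat.zero_le _) hc
  have hst : s ≤ t₁ := Nat.findGreatest_le t₁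
  have hwidth : (n : ℤ) ≤ (t₁ - s : ℕ) := by
    have := M.abs_pos_add_sub_pos_le c s (t₁ - s)
    rwa [Nat.add_sub_cancel' hst, h₁, hs, sub_zero, abs_of_nonneg (by positivity)] at this
  refine ⟨(M.step)^[s] c, t₂ - s, hs, by omega, ?_, fun t ht htn => ?_⟩
  · rwa [pos_iterate, Nat.sub_add_cancel (by omega)]
  · rw [pos_iterate]
    exact Nat.findGreatest_is_greatest (P := fun s => M.pos s c = 0) (n := t₁) (k := t + s)
      (by omega) (by omega)

def toCells (c : Config A Q) : ℤ → Cell A Q :=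
  fun i => if i = c.2.2 then Sum.inr (c.1 i, c.2.1) else Sum.inl (c.1 i)

lemma isHead_toCells_iff (c : Config A Q) (i : ℤ) : isHead (toCells c i) ↔ i = c.2.2 := by
  unfold toCells
  split_ifs with h
  · exact iff_of_true ⟨_, rfl⟩ h
  · exact iff_of_false (not_isHead_inl _) h

lemma xHmem_toCells (c : Config A Q) : XHmem (toCells c) := fun i hi j hj =>
  ((isHead_toCells_iff c i).1 hi).trans ((isHead_toCells_iff c j).1 hj).symm

variable {x y : ℤ → Cell A Q}

lemma hstep_eq_update (hx : XHmem x) {p : ℤ} {a : A} {q : Q} (hp : x p = Sum.inr (a, q)) :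
    M.hstep x = Function.update (Function.update x p (Sum.inl (M.δ a q).1))
      (p + dir (M.δ a q).2.2)
      (Sum.inr (Sum.elim id Prod.fst (x (p + dir (M.δ a q).2.2)), (M.δ a q).2.1)) := by
  have h : ∃ i : ℤ, ∃ b : A, ∃ q : Q, x i = Sum.inr (b, q) := ⟨p, a, q, hp⟩
  have hspec := h.choose_spec.choose_spec.choose_spec
  have hi : h.choose = p := hx ⟨_, hspec⟩ ⟨_, hp⟩
  have hbq : (h.choose_spec.choose, h.choose_spec.choose_spec.choose) = (a, q) :=
    Sum.inr.inj (hspec.symm.trans (hi ▸ hp))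
  have ha : h.choose_spec.choose = a := congrArg Prod.fst hbq
  have hq : h.choose_spec.choose_spec.choose = q := congrArg Prod.snd hbq
  rw [hstep, dif_pos h, ← hi, ← ha, ← hq]
  dsimp only
  rw [Function.update_of_ne (add_dir_ne_self _ _)]
  congr 1
  rcases x (h.choose + _) with _ | _ <;> rfl

lemma hstep_eq_self (hx : ∀ i, ¬ isHead (x i)) : M.hstep x = x := by
  rw [hstep, dif_neg]
  rintro ⟨i, b, q, h⟩
  exact hx i ⟨_, h⟩

lemma mapsTo_hstep : Set.MapsTo M.hstep {x | XHmem x} {x | XHmem x} := by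
  intro x hx
  by_cases h : ∃ p, isHead (x p)
  · obtain ⟨p, ⟨a, q⟩, hp⟩ := h
    have hhead : ∀ i, isHead (M.hstep x i) → i = p + dir (M.δ a q).2.2 := by
      intro i hi
      by_contra hne
      rw [hstep_eq_update M hx hp, Function.update_of_ne hne, Function.update_apply] at hi
      split_ifs at hi with hip
      · exact not_isHead_inl _ hi
      · exact hip (hx hi ⟨_, hp⟩)
    exact fun i hi j hj => (hhead i hi).trans (hhead j hj).symm
  · push Not at h
    rwa [hstep_eq_self M h]

lemma hstep_toCells (c : Config A Q) : M.hstep (toCells c) = toCells (M.step c) := by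
  rw [hstep_eq_update M (xHmem_toCells c) (p := c.2.2) (a := c.1 c.2.2) (q := c.2.1)
    (by simp [toCells])]
  have := add_dir_ne_self c.2.2 (M.δ (c.1 c.2.2) c.2.1).2.2
  funext i
  simp only [toCells, step, Function.update_apply]
  split_ifs <;> simp_all

lemma semiconj_toCells : Function.Semiconj toCells M.step M.hstep :=
  fun c => (hstep_toCells M c).symm

lemma hstep_apply_eq_self (hx : XHmem x) {i : ℤ}
    (hi : ∀ p, |p - i| ≤ 1 → ¬ isHead (x p)) : M.hstep x i = x i := by
  by_cases h : ∃ p, isHead (x p)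
  · obtain ⟨p, ⟨a, q⟩, hp⟩ := h
    have hpi : ¬ |p - i| ≤ 1 := fun h => hi p h ⟨_, hp⟩
    rw [abs_le] at hpi
    rw [hstep_eq_update M hx hp, Function.update_of_ne, Function.update_of_ne] <;>
      rcases dir_eq_one_or_neg_one (M.δ a q).2.2 with h | h <;> omega
  · push Not at h
    rw [hstep_eq_self M h]

lemma hstep_apply_eq_of_agree (hx : XHmem x) (hy : XHmem y) {i : ℤ}
    (hxy : ∀ p, |p - i| ≤ 1 → x p = y p) : M.hstep x i = M.hstep y i := by
  by_cases h : ∃ p, |p - i| ≤ 1 ∧ isHead (x p)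
  · obtain ⟨p, hpi, ⟨a, q⟩, hp⟩ := h
    rw [hstep_eq_update M hx hp, hstep_eq_update M hy ((hxy p hpi) ▸ hp)]
    simp only [Function.update_apply]
    split_ifs with h₁
    · rw [← h₁, hxy i (by simp)]
    · rfl
    · exact hxy i (by simp)
  · push Not at h
    have h' : ∀ p, |p - i| ≤ 1 → ¬ isHead (y p) := fun p hp => hxy p hp ▸ h p hp
    rw [hstep_apply_eq_self M hx h, hstep_apply_eq_self M hy h', hxy i (by simp)]

lemma iterate_hstep_apply_eq_of_agree (hx : XHmem x) (hy : XHmem y) (t : ℕ) {R : ℤ}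
    (hxy : ∀ i, |i| ≤ R + t → x i = y i) :
    ∀ i, |i| ≤ R → (M.hstep)^[t] x i = (M.hstep)^[t] y i := by
  induction t generalizing R with
  | zero => simpa using hxy
  | succ t ih =>
    intro i hi
    rw [Function.iterate_succ_apply', Function.iterate_succ_apply']
    refine hstep_apply_eq_of_agree M ((mapsTo_hstep M).iterate t hx)
      ((mapsTo_hstep M).iterate t hy) fun p hp => ih (R := R + 1) (fun j hj => hxy j ?_) p ?_
    · push_cast at hj ⊢; linarith
    · rw [abs_le] at hi hp ⊢; constructor <;> linarith

end TuringMachine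

/-- If the machine can make arbitrarily wide right-cycles at cell 0 (for each j
there is a configuration on which the head starts at 0, reaches some cell n > j
and later returns to 0), then the moving-head system T_H has a configuration
containing the head which is not an equicontinuity point. -/
theorem unbounded_right_cycles_gives_non_equicontinuous_head_config
    {A Q : Type*} [Fintype A] [Fintype Q]
    (M : TuringMachine A Q)
    (hcyc : ∀ j : ℕ, ∃ (x : TuringMachine.Config A Q) (n t₁ t₂ : ℕ),
      j < n ∧ 0 < t₁ ∧ t₁ < t₂ ∧ x.2.2 = 0 ∧
      M.pos t₁ x = n ∧ M.pos t₂ x = 0) :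
    ∃ x : ℤ → TuringMachine.Cell A Q, TuringMachine.XHmem x ∧
      (∃ i : ℤ, TuringMachine.isHead (x i)) ∧
      ∃ k : ℕ, ∀ m : ℕ, ∃ y : ℤ → TuringMachine.Cell A Q,
        TuringMachine.XHmem y ∧ (∀ i : ℤ, |i| ≤ (m : ℤ) → y i = x i) ∧
        ∃ t : ℕ, ∃ j : ℤ, |j| ≤ (k : ℤ) ∧
          ((M.hstep)^[t] y) j ≠ ((M.hstep)^[t] x) j := by
  open TuringMachine in
  choose c n t₁ t₂ hn _ h₁₂ hc h₁ h₂ using hcyc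
  choose d v hd hv hdv hdaway using fun j => M.exists_excursion (hc j) (h₁ j) (h₁₂ j) (h₂ j)
  obtain ⟨x, hx⟩ := exists_frequently_forall_finset_eq fun j => toCells (d j)
  have hagree : ∀ (m : ℕ) (j : ℕ), (∀ i ∈ Finset.Icc (-(m : ℤ)) m, toCells (d j) i = x i) →
      ∀ i : ℤ, |i| ≤ m → toCells (d j) i = x i :=
    fun m j hj i hi => hj i (Finset.mem_Icc.2 (abs_le.1 hi))
  have hxhead : ∀ i, isHead (x i) ↔ i = 0 := fun i => by
    obtain ⟨j, hj⟩ := (hx {i}).exists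
    rw [← hj i (Finset.mem_singleton_self i), isHead_toCells_iff, hd j]
  have hxX : XHmem x := fun i hi k hk => ((hxhead i).1 hi).trans ((hxhead k).1 hk).symm
  have hnever : ∀ t, 0 < t → ¬ isHead ((M.hstep)^[t] x 0) := by
    intro t ht
    obtain ⟨j, htj, hj⟩ := (hx (Finset.Icc (-(t : ℤ)) t)).forall_exists_of_atTop t
    rw [iterate_hstep_apply_eq_of_agree M hxX (xHmem_toCells _) t (R := 0)
      (fun i hi => (hagree t j hj i (by simpa using hi)).symm) 0 (by simp),
      ← (semiconj_toCells M).iterate_right, isHead_toCells_iff]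
    exact (hdaway j t ht (by have := hn j; omega)).symm
  refine ⟨x, hxX, ⟨0, (hxhead 0).2 rfl⟩, 0, fun m => ?_⟩
  obtain ⟨j, hj⟩ := (hx (Finset.Icc (-(m : ℤ)) m)).exists
  refine ⟨toCells (d j), xHmem_toCells _, hagree m j hj, v j, 0, by simp, fun h => ?_⟩
  apply hnever (v j) (hv j)
  rw [← h, ← (semiconj_toCells M).iterate_right, isHead_toCells_iff]
  exact (hdv j).symm
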